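/- Let 𝒞1 and 𝒞2 be fuzzy coverings of a finite nonempty set U. If lower_{𝒞1}(X) = lower_{𝒞2}(X) for every fuzzy set X of U, then upper_{𝒞1}(X) = upper_{𝒞2}(X) for every fuzzy set X of U. -/
import Mathlib


instance : Fact ((0:ℝ) ≤ 1) := ⟨zero_le_one⟩

noncomputable section

/-- A fuzzy covering of `U`: a finite nonempty collection of fuzzy sets (maps `U → [0,1]`)
such that every member is non-null and every point has positive membership in some member. -/
def IsFuzzyCovering {U : Type*} (𝒞 : Set (U → unitInterval)) : Prop :=
  𝒞.Finite ∧ 𝒞.Nonempty ∧ (∀ C ∈ 𝒞, ∃ x, 0 < C x) ∧ (∀ x, ∃ C ∈ 𝒞, 0 < C x)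

/-- The neighborhood of `x`: pointwise infimum of all members with positive value at `x`. -/
def nbhd {U : Type*} (𝒞 : Set (U → unitInterval)) (x : U) : U → unitInterval :=
  ⨅ C ∈ {C ∈ 𝒞 | 0 < C x}, C

/-- The lower approximation of `X`: union of all members contained in `X`. -/
def lowerApprox {U : Type*} (𝒞 : Set (U → unitInterval)) (X : U → unitInterval) :
    U → unitInterval :=
  ⨆ C ∈ {C ∈ 𝒞 | C ≤ X}, C

/-- The upper approximation of `X`. -/
def upperApprox {U : Type*} (𝒞 : Set (U → unitInterval)) (X : U → unitInterval) :
    U → unitInterval :=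
  (⨆ x ∈ {x | 0 < X x ∧ lowerApprox 𝒞 X x = 0}, nbhd 𝒞 x) ⊔ lowerApprox 𝒞 X

lemma le_lowerApprox_self {U : Type*} (𝒞 : Set (U → unitInterval)) (X : U → unitInterval)
    (hX : X ∈ 𝒞) : X ≤ lowerApprox 𝒞 X :=
  le_biSup (fun C => C) (show X ∈ {C ∈ 𝒞 | C ≤ X} from ⟨hX, le_refl X⟩)

lemma exists_of_lowerApprox_pos {U : Type*} (𝒞 : Set (U → unitInterval))
    (X : U → unitInterval) (x : U) (hpos : 0 < lowerApprox 𝒞 X x) :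
    ∃ C ∈ 𝒞, C ≤ X ∧ 0 < C x := by
  by_contra hc
  push_neg at hc
  have hz : lowerApprox 𝒞 X x ≤ 0 := by
    rw [lowerApprox]
    simp only [iSup_apply]
    apply iSup₂_le
    rintro C ⟨hC, hCX⟩
    exact hc C hC hCX
  exact absurd hpos (not_lt.mpr hz)

lemma nbhd_eq_iInf_lower {U : Type*} (𝒞 : Set (U → unitInterval)) (x : U) :
    nbhd 𝒞 x = ⨅ X ∈ {X : U → unitInterval | 0 < lowerApprox 𝒞 X x}, X := by
  apply le_antisymm
  · apply le_iInf₂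
    intro X hX
    obtain ⟨C, hC, hCX, hCx⟩ := exists_of_lowerApprox_pos 𝒞 X x hX
    exact le_trans (biInf_le _ (show C ∈ {C ∈ 𝒞 | 0 < C x} from ⟨hC, hCx⟩)) hCX
  · apply le_iInf₂
    rintro C ⟨hC, hCx⟩
    exact biInf_le _ (show (0:unitInterval) < lowerApprox 𝒞 C x from
      lt_of_lt_of_le hCx (le_lowerApprox_self 𝒞 C hC x))

/-- If two fuzzy coverings give the same lower approximations, they give the same
upper approximations. -/
theorem upperApprox_eq_of_lowerApprox_eq {U : Type*} [Fintype U] [Nonempty U]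
    (𝒞₁ 𝒞₂ : Set (U → unitInterval))
    (h₁ : IsFuzzyCovering 𝒞₁) (h₂ : IsFuzzyCovering 𝒞₂)
    (h : ∀ X : U → unitInterval, lowerApprox 𝒞₁ X = lowerApprox 𝒞₂ X) :
    ∀ X : U → unitInterval, upperApprox 𝒞₁ X = upperApprox 𝒞₂ X := by
  have hn : ∀ x, nbhd 𝒞₁ x = nbhd 𝒞₂ x := by
    intro x
    rw [nbhd_eq_iInf_lower, nbhd_eq_iInf_lower]
    simp only [h]
  intro X
  unfold upperApprox
  rw [h X]
  congr 1
  exact iSup_congr fun x => by rw [hn x]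
  end
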